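/- Fix A > 0 and set λ(k) = λ(k;A), E(k) = I + (iA/(λ(k) + k))·σ₁, D(k) = 2λ(k)/(λ(k) + k), and d(k) = √(D(k)) (principal square root). For every k ∈ ℂ with k ≠ ±iA, the scattering matrix of the pure one-sided step initial condition, S(k) = d(k)·E(k)^{−1}, satisfies: its (2,2) entry equals 1/d(k); the reflection coefficient ρ(k) = S(k)₁₂/S(k)₂₂ equals −iA/(λ(k) + k); and ρ(k) ≠ 0 for every such k (so the reflection coefficient has no zeros). -/

import Mathlib

/-- The argument of a complex number normalized to lie in `[−π/2, 3π/2)`: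
if `arg z ∈ (−π, −π/2)` we add `2π`. -/
noncomputable def argS (z : ℂ) : ℝ :=
  if Complex.arg z < -(Real.pi / 2) then Complex.arg z + 2 * Real.pi else Complex.arg z

/-- The branch `λ(k;A) = √(r₁r₂)·exp(i(φ₁+φ₂)/2)` of `(k² + A²)^{1/2}`, where
`k − iA = r₁e^{iφ₁}`, `k + iA = r₂e^{iφ₂}` with `φ₁, φ₂ ∈ [−π/2, 3π/2)`;
its branch cut lies along the segment `i[−A,A]` and it is continuous from the
right on the cut. -/
noncomputable def lamBr (A : ℝ) (k : ℂ) : ℂ :=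
  ((Real.sqrt (‖k - Complex.I * (A : ℂ)‖ * ‖k + Complex.I * (A : ℂ)‖) : ℝ) : ℂ) *
    Complex.exp (Complex.I *
      (((argS (k - Complex.I * (A : ℂ)) + argS (k + Complex.I * (A : ℂ))) / 2 : ℝ) : ℂ))

/-- Pauli matrix `σ₁`. -/
noncomputable def sigma1 : Matrix (Fin 2) (Fin 2) ℂ := !![0, 1; 1, 0]

/-- `E(k) = I + (iA/(λ(k) + k))·σ₁`. -/
noncomputable def EmatOne (A : ℝ) (k : ℂ) : Matrix (Fin 2) (Fin 2) ℂ :=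
  1 + (Complex.I * (A : ℂ) / (lamBr A k + k)) • sigma1

/-- `d(k) = √(D(k))` with `D(k) = 2λ(k)/(λ(k) + k)` (principal square root). -/
noncomputable def dOne (A : ℝ) (k : ℂ) : ℂ :=
  (2 * lamBr A k / (lamBr A k + k)) ^ ((1 : ℂ) / 2)

/-- The scattering matrix of the pure one-sided step initial condition,
`S(k) = d(k)·E(k)⁻¹`. -/
noncomputable def SmatOne (A : ℝ) (k : ℂ) : Matrix (Fin 2) (Fin 2) ℂ :=
  dOne A k • (EmatOne A k)⁻¹

lemma expS (z : ℂ) : Complex.exp (Complex.I * (argS z : ℂ)) = Complex.exp (Complex.I * (Complex.arg z : ℂ)) := by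
  unfold argS
  split
  · push_cast
    rw [mul_add, Complex.exp_add,
      show Complex.I * (2 * (Real.pi : ℂ)) = 2 * Real.pi * Complex.I by ring,
      Complex.exp_two_pi_mul_I, mul_one]
  · rfl

lemma lam_sq (A : ℝ) (k : ℂ) : lamBr A k ^ 2 = k ^ 2 + (A : ℂ) ^ 2 := by
  unfold lamBr
  set a := k - Complex.I * (A : ℂ)
  set b := k + Complex.I * (A : ℂ)
  have h1 : (((Real.sqrt (‖a‖ * ‖b‖)) : ℂ)) ^ 2
      = (‖a‖ : ℂ) * (‖b‖ : ℂ) := by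
    rw [← Complex.ofReal_pow, Real.sq_sqrt (by positivity)]
    push_cast; ring
  have h2 : Complex.exp (Complex.I * (((argS a + argS b) / 2 : ℝ) : ℂ)) ^ 2
      = Complex.exp (Complex.I * (argS a : ℂ)) * Complex.exp (Complex.I * (argS b : ℂ)) := by
    rw [← Complex.exp_add, sq, ← Complex.exp_add]
    congr 1
    push_cast; ring
  rw [mul_pow, h1, h2, expS, expS]
  have ha : (‖a‖ : ℂ) * Complex.exp (Complex.I * (Complex.arg a : ℂ)) = a := by
    rw [mul_comm Complex.I]; exact Complex.norm_mul_exp_arg_mul_I a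
  have hb : (‖b‖ : ℂ) * Complex.exp (Complex.I * (Complex.arg b : ℂ)) = b := by
    rw [mul_comm Complex.I]; exact Complex.norm_mul_exp_arg_mul_I b
  calc (‖a‖ : ℂ) * (‖b‖ : ℂ) *
      (Complex.exp (Complex.I * (Complex.arg a : ℂ)) * Complex.exp (Complex.I * (Complex.arg b : ℂ)))
      = ((‖a‖ : ℂ) * Complex.exp (Complex.I * (Complex.arg a : ℂ))) *
        ((‖b‖ : ℂ) * Complex.exp (Complex.I * (Complex.arg b : ℂ))) := by ring
    _ = a * b := by rw [ha, hb]
    _ = k ^ 2 + (A:ℂ)^2 := by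
        simp only [a, b]
        have : Complex.I ^ 2 = -1 := Complex.I_sq
        ring_nf
        rw [this]; ring

/-- For the pure one-sided step, for every `k ≠ ±iA`: the `(2,2)` entry of
`S(k) = d(k)E(k)⁻¹` equals `1/d(k)`; the reflection coefficient
`ρ(k) = S(k)₁₂/S(k)₂₂` equals `−iA/(λ(k)+k)`; and `ρ(k) ≠ 0` (no zeros). -/
theorem one_sided_step_scattering (A : ℝ) (hA : 0 < A) (k : ℂ)
    (h1 : k ≠ Complex.I * (A : ℂ)) (h2 : k ≠ -(Complex.I * (A : ℂ))) :
    SmatOne A k 1 1 = 1 / dOne A k ∧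
    SmatOne A k 0 1 / SmatOne A k 1 1 = -(Complex.I * (A : ℂ)) / (lamBr A k + k) ∧
    SmatOne A k 0 1 / SmatOne A k 1 1 ≠ 0 := by
  set lam := lamBr A k with hlam
  have hI : Complex.I ^ 2 = -1 := Complex.I_sq
  have hA0 : (A : ℂ) ≠ 0 := by exact_mod_cast hA.ne'
  have hsq : lam ^ 2 = k ^ 2 + (A : ℂ) ^ 2 := lam_sq A k
  have hlamne : lam ≠ 0 := by
    intro h
    have h2' : k ^ 2 + (A:ℂ) ^ 2 = 0 := by rw [← hsq, h]; ring
    have hz : (k - Complex.I * (A:ℂ)) * (k + Complex.I * (A:ℂ)) = 0 := by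
      linear_combination h2' - (A:ℂ)^2 * hI
    rcases mul_eq_zero.1 hz with h | h
    · exact h1 (by linear_combination h)
    · exact h2 (by linear_combination h)
  have hden : lam + k ≠ 0 := by
    intro h
    have hk : lam = -k := by linear_combination h
    have hz : (A : ℂ) ^ 2 = 0 := by
      have := hsq; rw [hk] at this; linear_combination -this
    exact hA0 (pow_eq_zero_iff (n := 2) (by norm_num) |>.1 hz)
  set c : ℂ := Complex.I * (A : ℂ) / (lam + k) with hc
  have hcne : c ≠ 0 := div_ne_zero (mul_ne_zero Complex.I_ne_zero hA0) hden
  set D : ℂ := 2 * lam / (lam + k) with hD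
  have hDne : D ≠ 0 := div_ne_zero (mul_ne_zero two_ne_zero hlamne) hden
  have hdet : 1 - c ^ 2 = D := by
    rw [hc, hD]
    have key : (lam+k)^2 - (Complex.I*(A:ℂ))^2 = 2*lam*(lam+k) := by
      linear_combination -hsq - (A:ℂ)^2*hI
    rw [div_pow, one_sub_div (pow_ne_zero 2 hden), key, div_eq_div_iff (pow_ne_zero 2 hden) hden]
    ring
  have hd2 : dOne A k ^ 2 = D := by
    rw [dOne, ← hlam, ← hD, sq, ← Complex.cpow_add _ _ hDne]
    norm_num
  have hdne : dOne A k ≠ 0 := by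
    intro h
    rw [h] at hd2
    exact hDne (by simpa using hd2.symm)
  have hE : EmatOne A k = !![1, c; c, 1] := by
    rw [EmatOne, sigma1, ← hlam, ← hc]
    ext i j
    fin_cases i <;> fin_cases j <;> simp [Matrix.one_apply]
  have hEinv : (EmatOne A k)⁻¹ = (1 - c^2)⁻¹ • !![1, -c; -c, 1] := by
    rw [hE, Matrix.inv_def, Matrix.adjugate_fin_two, Matrix.det_fin_two_of,
      Ring.inverse_eq_inv']
    congr 1
    ring_nf
  have hS : ∀ i j, SmatOne A k i j = dOne A k * ((1 - c^2)⁻¹ * !![(1:ℂ), -c; -c, 1] i j) := by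
    intro i j
    rw [SmatOne, hEinv]
    fin_cases i <;> fin_cases j <;> simp [Matrix.smul_apply]
  have h11 : SmatOne A k 1 1 = dOne A k * (1 - c^2)⁻¹ := by
    rw [hS]; norm_num
  have h01 : SmatOne A k 0 1 = dOne A k * (1 - c^2)⁻¹ * (-c) := by
    rw [hS]; norm_num; ring
  have h11ne : dOne A k * (1 - c^2)⁻¹ ≠ 0 := by
    rw [hdet]
    exact mul_ne_zero hdne (inv_ne_zero hDne)
  have key : SmatOne A k 1 1 = 1 / dOne A k := by
    rw [h11, hdet, ← hd2, eq_div_iff hdne, sq]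
    field_simp
  have hrho : SmatOne A k 0 1 / SmatOne A k 1 1 = -c := by
    rw [h01, h11]; exact mul_div_cancel_left₀ (-c) h11ne
  refine ⟨key, ?_, ?_⟩
  · rw [hrho, hc, neg_div]
  · rw [hrho]; simpa using hcne
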